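/- arXiv:2505.22939 — 2 statements merged into one kernel-verified Lean document; each statement's English description precedes it below -/
import Mathlib

section
/- During any execution of DemocraticProcess_{C,f}(N, B, r), every time the inner while-loop condition (the check 'B − c(W) ≥ C[j]') is evaluated, the invariant B − c(W) ≥ |S| · B/n holds, where W is the current slate, c(W) its current total cost, and S the current set of remaining agents. -/
/-!
Statement 5 (Observation A.1 of the paper): during any execution of
`DemocraticProcess_{C,f}(N,B,r)`, every time the inner while-loop condition
`B - c(W) >= C[j]` is evaluated, the invariant `B - c(W) >= |S| * B / n` holds.
-/

namespace GenSoc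

open Finset

variable {A U : Type} [Fintype A] [DecidableEq A] [DecidableEq U]

/-- `ceilDiv a b = ⌈a / b⌉` for natural numbers. -/
def ceilDiv (a b : ℕ) : ℕ := (a + b - 1) / b

/-- The number of agents in `S` that approve statement `α` at level `ℓ`. -/
def supp (u : A → U → ℕ) (α : U) (S : Finset A) (ℓ : ℕ) : ℕ :=
  (S.filter fun i => ℓ ≤ u i α).card

/-- Total cost of a slate. -/
def cost (c : U → ℕ) (W : Finset U) : ℕ := ∑ α ∈ W, c α

/-- A discriminative query `Disc` is `β`-accurate w.r.t. the true utilities `u`. -/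
def DiscAccurate (u Disc : A → U → ℕ) (β : ℕ) : Prop :=
  ∀ i α, u i α - β ≤ Disc i α ∧ Disc i α ≤ u i α + β

/-- A generative query `Gen` is `(γ,δ,μ)`-accurate w.r.t. the true utilities `u`
and costs `c`, for utility levels in `[r]` and cost arguments in `[B]`. -/
def GenAccurate (c : U → ℕ) (u : A → U → ℕ) (Gen : Finset A → ℕ → ℕ → U)
    (r B : ℕ) (γ : ℝ) (δ : ℕ) (μ : ℝ) : Prop :=
  ∀ (S : Finset A) (ℓ x : ℕ), 1 ≤ ℓ → ℓ ≤ r → 1 ≤ x → x ≤ B →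
    c (Gen S ℓ x) ≤ x ∧
    ∀ α : U, c α ≤ ⌈μ * (x : ℝ)⌉₊ →
      γ * (supp u α S ℓ : ℝ) ≤ (supp u (Gen S ℓ x) S (ℓ - δ) : ℝ)

/-- An assignment `ω` of agents to statements is balanced w.r.t. a slate `W`:
every `α ∈ W` is assigned exactly `⌊c(α)·n/B⌋` or `⌈c(α)·n/B⌉` agents. -/
def IsBalanced (c : U → ℕ) (B : ℕ) (ω : A → U) (W : Finset U) : Prop :=
  ∀ α ∈ W,
    (Finset.univ.filter fun i : A => ω i = α).card = c α * Fintype.card A / B ∨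
    (Finset.univ.filter fun i : A => ω i = α).card = ceilDiv (c α * Fintype.card A) B

/-- `(b,d)`-costBJR: there is a balanced assignment `ω : N → W` such that no (nonempty)
coalition `S`, statement `α` and threshold `θ ∈ [r]` satisfy
(i) `|S| ≥ d·⌈c(α)·n/B⌉`, (ii) `u_i(α) ≥ θ` for all `i ∈ S`, and
(iii) `u_i(ω(i)) < θ - b` for all `i ∈ S`. -/
def CostBJR (c : U → ℕ) (u : A → U → ℕ) (r B : ℕ) (b d : ℝ) (W : Finset U) : Prop :=
  ∃ ω : A → U, (∀ i, ω i ∈ W) ∧ IsBalanced c B ω W ∧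
    ¬ ∃ (S : Finset A) (α : U) (θ : ℕ), S.Nonempty ∧ 1 ≤ θ ∧ θ ≤ r ∧
      d * (ceilDiv (c α * Fintype.card A) B : ℝ) ≤ (S.card : ℝ) ∧
      (∀ i ∈ S, θ ≤ u i α) ∧ (∀ i ∈ S, (u i (ω i) : ℝ) + b < (θ : ℝ))

/-- A state of `DemocraticProcess_{C,f}`: remaining agents `S`, current slate `W`,
current utility level `lvl` and current (0-based) index `j` into the cost list. -/
structure PState (A U : Type) where
  S : Finset A
  W : Finset U
  lvl : ℕ
  j : ℕ

/-- The set `U` of statements generated in Line 5 of the process. -/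
def genSet (Gen : Finset A → ℕ → ℕ → U) (f : ℕ → Finset ℕ) (S : Finset A) (ℓ x : ℕ) :
    Finset U :=
  (f ℓ).image fun ℓ' => Gen S ℓ' x

/-- `S_α`: the agents of `S` whose discriminative-query value for `α` is at least `ℓ`. -/
def approvers (Disc : A → U → ℕ) (S : Finset A) (ℓ : ℕ) (α : U) : Finset A :=
  S.filter fun i => ℓ ≤ Disc i α

/-- One step of `DemocraticProcess_{C,f}(N,B,r)` (nondeterminism resolves ties in the
argmax and the choice of removed agents with the highest discriminative values). -/
inductive Step (c : U → ℕ) (Disc : A → U → ℕ) (Gen : Finset A → ℕ → ℕ → U)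
    (C : List ℕ) (f : ℕ → Finset ℕ) (B : ℕ) : PState A U → PState A U → Prop
  | add {S : Finset A} {W : Finset U} {ℓ j : ℕ} (αs : U) (R : Finset A)
      (hℓ : 1 ≤ ℓ) (hj : j < C.length) (hbud : cost c W + C.getD j 0 ≤ B)
      (hαs : αs ∈ genSet Gen f S ℓ (C.getD j 0))
      (hmax : ∀ α ∈ genSet Gen f S ℓ (C.getD j 0),
        (approvers Disc S ℓ α).card ≤ (approvers Disc S ℓ αs).card)
      (hsize : ceilDiv (c αs * Fintype.card A) B ≤ (approvers Disc S ℓ αs).card)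
      (hR : R ⊆ approvers Disc S ℓ αs)
      (hRcard : R.card = ceilDiv (c αs * Fintype.card A) B)
      (htop : ∀ i ∈ R, ∀ i' ∈ approvers Disc S ℓ αs, i' ∉ R → Disc i' αs ≤ Disc i αs) :
      Step c Disc Gen C f B ⟨S, W, ℓ, j⟩ ⟨S \ R, insert αs W, ℓ, j⟩
  | incj {S : Finset A} {W : Finset U} {ℓ j : ℕ} (αs : U)
      (hℓ : 1 ≤ ℓ) (hj : j < C.length) (hbud : cost c W + C.getD j 0 ≤ B)
      (hαs : αs ∈ genSet Gen f S ℓ (C.getD j 0))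
      (hmax : ∀ α ∈ genSet Gen f S ℓ (C.getD j 0),
        (approvers Disc S ℓ α).card ≤ (approvers Disc S ℓ αs).card)
      (hsize : (approvers Disc S ℓ αs).card < ceilDiv (c αs * Fintype.card A) B) :
      Step c Disc Gen C f B ⟨S, W, ℓ, j⟩ ⟨S, W, ℓ, j + 1⟩
  | decl {S : Finset A} {W : Finset U} {ℓ j : ℕ}
      (hℓ : 1 ≤ ℓ)
      (hexit : ¬ (j < C.length ∧ cost c W + C.getD j 0 ≤ B)) :
      Step c Disc Gen C f B ⟨S, W, ℓ, j⟩ ⟨S, W, ℓ - 1, 0⟩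

/-- `W` is a possible output of `DemocraticProcess_{C,f}(N,B,r)`: some terminal state
(level 0 reached or no agents remaining) with slate `W` is reachable from the initial
state `(N, ∅, r, 0)`. -/
def IsOutput (c : U → ℕ) (Disc : A → U → ℕ) (Gen : Finset A → ℕ → ℕ → U)
    (C : List ℕ) (f : ℕ → Finset ℕ) (B r : ℕ) (W : Finset U) : Prop :=
  ∃ s : PState A U, Relation.ReflTransGen (Step c Disc Gen C f B) ⟨Finset.univ, ∅, r, 0⟩ s ∧
    (s.lvl = 0 ∨ s.S = ∅) ∧ s.W = W

lemma le_ceilDiv_mul (a B : ℕ) (hB : 0 < B) : a ≤ ceilDiv a B * B := by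
  unfold ceilDiv
  rcases Nat.eq_zero_or_pos a with rfl | ha
  · simp
  · have h := Nat.div_add_mod (a + B - 1) B
    have hm : (a + B - 1) % B < B := Nat.mod_lt _ hB
    rw [Nat.mul_comm]
    set k := B * ((a + B - 1) / B) with hk
    omega

/-- Observation A.1: at every reachable state of
`DemocraticProcess_{C,f}(N,B,r)` — in particular every time the inner while-loop
condition `B − c(W) ≥ C[j]` is evaluated — we have `B − c(W) ≥ |S|·B/n`. -/
theorem inner_loop_invariant
    (c : U → ℕ) (Disc : A → U → ℕ) (Gen : Finset A → ℕ → ℕ → U)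
    (C : List ℕ) (f : ℕ → Finset ℕ) (B r : ℕ)
    (hB : 0 < B) (hn : 0 < Fintype.card A)
    (s : PState A U)
    (hs : Relation.ReflTransGen (Step c Disc Gen C f B) ⟨Finset.univ, ∅, r, 0⟩ s) :
    (s.S.card : ℝ) * (B : ℝ) / (Fintype.card A : ℝ) ≤ (B : ℝ) - (cost c s.W : ℝ) := by
  have key : cost c s.W * Fintype.card A + s.S.card * B ≤ Fintype.card A * B := by
    induction hs with
    | refl => simp [cost]
    | tail hst step ih =>
      cases step with
      | add αs R hℓ hj hbud hαs hmax hsize hR hRcard htop =>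
        rename_i S W ℓ j
        simp only at ih ⊢
        have hRS : R ⊆ S := hR.trans (Finset.filter_subset _ _)
        have h3 : R.card ≤ S.card := Finset.card_le_card hRS
        have h2 : (S \ R).card = S.card - R.card := Finset.card_sdiff_of_subset hRS
        have h4 : c αs * Fintype.card A ≤ R.card * B := by
          rw [hRcard]; exact le_ceilDiv_mul _ _ hB
        have h1 : cost c (insert αs W) ≤ cost c W + c αs := by
          by_cases h : αs ∈ W
          · simp [cost, Finset.insert_eq_self.2 h]
          · simp [cost, Finset.sum_insert h, Nat.add_comm]
        have h1' : cost c (insert αs W) * Fintype.card A ≤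
            cost c W * Fintype.card A + c αs * Fintype.card A := by
          have := Nat.mul_le_mul_right (Fintype.card A) h1
          rwa [Nat.add_mul] at this
        have h5 : (S \ R).card * B + R.card * B = S.card * B := by
          rw [h2, ← Nat.add_mul, Nat.sub_add_cancel h3]
        linarith
      | incj αs hℓ hj hbud hαs hmax hsize => simpa using ih
      | decl hℓ hexit => simpa using ih
  have hcost : (cost c s.W : ℝ) * (Fintype.card A : ℝ) + (s.S.card : ℝ) * B ≤
      (Fintype.card A : ℝ) * B := by exact_mod_cast key
  have hn' : (0 : ℝ) < (Fintype.card A : ℝ) := by exact_mod_cast hn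
  rw [div_le_iff₀ hn']
  nlinarith

end GenSoc
end

section
/- Assume the universe 𝒰 is closed under the union of statements, i.e., for every pair of statements α₁, α₂ ∈ 𝒰 there exists a statement α* ∈ 𝒰 with c(α*) ≤ c(α₁) + c(α₂) and u_i(α*) ≥ u_i(α₁) + u_i(α₂) for every agent i ∈ N. Then every slate W that satisfies cBJR (i.e., (0,1)-costBJR) also satisfies extended justified representation. -/
/-!
Statement 8 (Lemma A.4 of the paper): if the universe is closed under union of
statements (for all α₁, α₂ there is α* with c(α*) ≤ c(α₁) + c(α₂) and
u_i(α*) ≥ u_i(α₁) + u_i(α₂) for every agent i), then every slate satisfying cBJR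
(i.e. (0,1)-costBJR) also satisfies extended justified representation.
-/

namespace GenSoc

open Finset

variable {A U : Type} [Fintype A] [DecidableEq A] [DecidableEq U]

/-- cBJR ((0,1)-costBJR): there is a balanced assignment `ω : N → W` such that no
(nonempty) coalition `S`, statement `α` and threshold `θ ∈ [r]` satisfy
(i) `|S| ≥ ⌈c(α)·n/B⌉`, (ii) `u_i(α) ≥ θ` for all `i ∈ S`, and
(iii) `u_i(ω(i)) < θ` for all `i ∈ S`. -/
def CBJR (c : U → ℕ) (u : A → U → ℕ) (r B : ℕ) (W : Finset U) : Prop :=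
  ∃ ω : A → U, (∀ i, ω i ∈ W) ∧ IsBalanced c B ω W ∧
    ¬ ∃ (S : Finset A) (α : U) (θ : ℕ), S.Nonempty ∧ 1 ≤ θ ∧ θ ≤ r ∧
      ceilDiv (c α * Fintype.card A) B ≤ S.card ∧
      (∀ i ∈ S, θ ≤ u i α) ∧ (∀ i ∈ S, u i (ω i) < θ)

/-- Extended justified representation (Peters, Pierczyński, Skowron 2021): there is no
(nonempty) coalition `S` and finite set of statements `W'` with
(i) `(|S|/n)·B ≥ Σ_{α ∈ W'} c(α)` and
(ii) `Σ_{α ∈ W'} min_{j ∈ S} u_j(α) > Σ_{α ∈ W} u_i(α)` for every `i ∈ S`. -/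
def EJR (c : U → ℕ) (u : A → U → ℕ) (B : ℕ) (W : Finset U) : Prop :=
  ¬ ∃ (S : Finset A) (W' : Finset U) (hS : S.Nonempty),
      (∑ α ∈ W', (c α : ℝ)) ≤ (S.card : ℝ) / (Fintype.card A : ℝ) * (B : ℝ) ∧
      ∀ i ∈ S, (∑ α ∈ W, u i α) < ∑ α ∈ W', S.inf' hS fun j => u j α


lemma ceilDiv_le_of_le (a b k : ℕ) (hb : 0 < b) (h : a ≤ k * b) : ceilDiv a b ≤ k := by
  unfold ceilDiv
  have h1 : a + b - 1 ≤ (b - 1) + k * b := by omega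
  calc (a + b - 1) / b ≤ ((b - 1) + k * b) / b := Nat.div_le_div_right h1
    _ = (b - 1) / b + k := Nat.add_mul_div_right _ _ hb
    _ = k := by simp [Nat.div_eq_of_lt (show b - 1 < b by omega)]

lemma exists_union_stmt (c : U → ℕ) (u : A → U → ℕ)
    (hclosed : ∀ α₁ α₂ : U, ∃ αs : U,
      c αs ≤ c α₁ + c α₂ ∧ ∀ i : A, u i α₁ + u i α₂ ≤ u i αs)
    (W' : Finset U) (hW' : W'.Nonempty) :
    ∃ αs : U, c αs ≤ ∑ α ∈ W', c α ∧ ∀ i : A, ∑ α ∈ W', u i α ≤ u i αs := by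
  induction hW' using Finset.Nonempty.cons_induction with
  | singleton a => exact ⟨a, by simp, by simp⟩
  | cons a t ha ht ih =>
    obtain ⟨β, hβc, hβu⟩ := ih
    obtain ⟨γ, hγc, hγu⟩ := hclosed a β
    refine ⟨γ, ?_, ?_⟩
    · rw [Finset.sum_cons]
      exact hγc.trans (by omega)
    · intro i
      rw [Finset.sum_cons]
      exact le_trans (by have := hβu i; omega) (hγu i)

/-- Lemma A.4. -/
theorem cBJR_implies_EJR
    (c : U → ℕ) (u : A → U → ℕ) (r B : ℕ) (hB : 0 < B)
    (hu : ∀ i α, 1 ≤ u i α ∧ u i α ≤ r)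
    (hclosed : ∀ α₁ α₂ : U, ∃ αs : U,
      c αs ≤ c α₁ + c α₂ ∧ ∀ i : A, u i α₁ + u i α₂ ≤ u i αs)
    (W : Finset U) (hW : CBJR c u r B W) :
    EJR c u B W := by
  rintro ⟨S, W', hS, hcost, hutil⟩
  obtain ⟨ω, hωW, hbal, hno⟩ := hW
  apply hno
  obtain ⟨i0, hi0⟩ := hS
  have hn : 0 < Fintype.card A := Fintype.card_pos_iff.mpr ⟨i0⟩
  have hW' : W'.Nonempty := by
    rcases W'.eq_empty_or_nonempty with h | h
    · have := hutil i0 hi0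
      simp [h] at this
    · exact h
  obtain ⟨αs, hcs, hus⟩ := exists_union_stmt c u hclosed W' hW'
  set θ := S.inf' ⟨i0, hi0⟩ (fun j => u j αs) with hθdef
  have hθkey : ∑ α ∈ W', (S.inf' ⟨i0, hi0⟩ fun j => u j α) ≤ θ := by
    apply Finset.le_inf'
    intro j hj
    calc ∑ α ∈ W', (S.inf' ⟨i0, hi0⟩ fun j' => u j' α)
        ≤ ∑ α ∈ W', u j α :=
          Finset.sum_le_sum fun α _ => Finset.inf'_le _ hj
      _ ≤ u j αs := hus j
  have hθ1 : 1 ≤ θ := lt_of_le_of_lt (Nat.zero_le _) (lt_of_lt_of_le (hutil i0 hi0) hθkey)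
  have hθr : θ ≤ r := le_trans (Finset.inf'_le _ hi0) (hu i0 αs).2
  have hkey : (∑ α ∈ W', c α) * Fintype.card A ≤ S.card * B := by
    rw [← Nat.cast_le (α := ℝ)]
    push_cast
    have h2 := mul_le_mul_of_nonneg_right hcost
      (le_of_lt (by exact_mod_cast hn : (0:ℝ) < Fintype.card A))
    calc (∑ α ∈ W', (c α : ℝ)) * Fintype.card A
        ≤ (S.card : ℝ) / Fintype.card A * B * Fintype.card A := h2
      _ = S.card * B := by
          field_simp
  refine ⟨S, αs, θ, ⟨i0, hi0⟩, hθ1, hθr, ?_, ?_, ?_⟩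
  · exact ceilDiv_le_of_le _ _ _ hB
      (le_trans (Nat.mul_le_mul_right _ hcs) hkey)
  · exact fun i hi => Finset.inf'_le _ hi
  · intro i hi
    have h1 : u i (ω i) ≤ ∑ α ∈ W, u i α :=
      Finset.single_le_sum (fun α _ => Nat.zero_le _) (hωW i)
    exact lt_of_le_of_lt h1 (lt_of_lt_of_le (hutil i hi) hθkey)


end GenSoc
end
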